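/- arXiv:2109.07544 — 6 statements merged into one kernel-verified Lean document; each statement's English description precedes it below -/
import Mathlib

section
/- Let p < q be distinct primes with p > 2, m = (p-1)(q-1), and S the (m+1)×(m+1) shift matrix. Then the coefficient vector a of Φ_{pq} satisfies a = Σ_{i=0}^{p-2} S^{iq} c, where c = (Id - S) Φ_q(S^p) e_0. -/
/-!
For the lower shift matrix `S`, `S ^ k` sends `e₀` to `eₖ`, so `f(S) e₀` is the coefficient vector
of `f` truncated at degree `m`. The right-hand side is therefore the truncated coefficient vector of
`∑_{i<p-1} X^{iq} (1 - X) Φ_q(X^p)`. Since `Φ_q(X^p) = Φ_{pq} Φ_q` and `(1 - X) Φ_q = 1 - X^q`, this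
sum telescopes to `Φ_{pq} (1 - X^{(p-1)q})`, which agrees with `Φ_{pq}` below degree
`(p-1)q > m`.
-/

open Polynomial

namespace Matrix

variable {R : Type*} {n : ℕ}

theorem shift_pow_apply [Semiring R] {S : Matrix (Fin n) (Fin n) R}
    (hS : ∀ i j, S i j = if (i : ℕ) = (j : ℕ) + 1 then 1 else 0) (k : ℕ) (i j : Fin n) :
    (S ^ k) i j = if (i : ℕ) = j + k then 1 else 0 := by
  induction k generalizing i with
  | zero => simp [one_apply, Fin.ext_iff]
  | succ k ih =>
    rw [pow_succ', mul_apply]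
    simp only [ih, hS, ite_mul, one_mul, zero_mul]
    by_cases hjk : (j : ℕ) + k < n
    · rw [Finset.sum_eq_single ⟨j + k, hjk⟩ (fun l _ hl => ?_) (by simp)]
      · simp [add_assoc]
      · have hl' : (l : ℕ) ≠ j + k := fun h => hl (Fin.ext h)
        simp [hl']
    · have hl (l : Fin n) : (l : ℕ) ≠ j + k := by omega
      have hi : (i : ℕ) ≠ j + (k + 1) := by omega
      simp [hl, hi]

theorem aeval_shift_mulVec_single_zero [CommSemiring R] {S : Matrix (Fin (n + 1)) (Fin (n + 1)) R}
    (hS : ∀ i j, S i j = if (i : ℕ) = (j : ℕ) + 1 then 1 else 0) (f : R[X]) :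
    aeval S f *ᵥ Pi.single 0 1 = fun j : Fin (n + 1) => f.coeff j := by
  funext j
  rw [mulVec_single_one, col_apply]
  induction f using Polynomial.induction_on' with
  | add f g hf hg => rw [map_add, add_apply, hf, hg, coeff_add]
  | monomial k a =>
    rw [aeval_monomial, Algebra.algebraMap_eq_smul_one, smul_mul_assoc, one_mul, smul_apply,
      shift_pow_apply hS, coeff_monomial]
    simp [eq_comm]

end Matrix

namespace Polynomial

theorem coeff_mul_one_sub_X_pow_of_lt {R : Type*} [Ring R] (f : R[X]) {N j : ℕ} (hj : j < N) :
    (f * (1 - X ^ N)).coeff j = f.coeff j := by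
  rw [mul_sub, mul_one, coeff_sub, coeff_mul_X_pow', if_neg (by omega), sub_zero]

theorem sum_X_pow_mul_one_sub_X_mul_expand_cyclotomic (R : Type*) [CommRing R] {p q : ℕ}
    (hp : p.Prime) (hq : q.Prime) (hpq : p ≠ q) :
    ∑ i ∈ Finset.range (p - 1), X ^ (i * q) * ((1 - X) * expand R p (cyclotomic q R)) =
      cyclotomic (p * q) R * (1 - X ^ ((p - 1) * q)) := by
  have : Fact q.Prime := ⟨hq⟩
  have hexpand : expand R p (cyclotomic q R) = cyclotomic (p * q) R * cyclotomic q R := by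
    rw [cyclotomic_expand_eq_cyclotomic_mul hp ((Nat.prime_dvd_prime_iff_eq hp hq).not.2 hpq),
      mul_comm q]
  have hcyc : (1 - X) * cyclotomic q R = 1 - X ^ q := by
    rw [cyclotomic_prime, mul_neg_geom_sum]
  have hgeom : (∑ i ∈ Finset.range (p - 1), (X : R[X]) ^ (i * q)) * (1 - X ^ q) =
      1 - X ^ ((p - 1) * q) := by
    simpa only [← pow_mul, mul_comm q] using geom_sum_mul_neg ((X : R[X]) ^ q) (p - 1)
  rw [← Finset.sum_mul, hexpand, ← hgeom, ← hcyc]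
  ring

end Polynomial

theorem cyclotomic_coeff_vector_as_shift_sum_general (p q : ℕ) (hp : p.Prime) (hq : q.Prime)
    (hlt : p < q)
    (S : Matrix (Fin ((p - 1) * (q - 1) + 1)) (Fin ((p - 1) * (q - 1) + 1)) ℚ)
    (hS : ∀ i j, S i j = if (i : ℕ) = (j : ℕ) + 1 then 1 else 0) :
    (fun j : Fin ((p - 1) * (q - 1) + 1) => (cyclotomic (p * q) ℚ).coeff (j : ℕ)) =
      ∑ i ∈ Finset.range (p - 1),
        (S ^ (i * q)).mulVec
          (((1 - S) * aeval (S ^ p) (cyclotomic q ℚ)).mulVec (Pi.single 0 1)) := by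
  have hshift_sum : ∑ i ∈ Finset.range (p - 1),
      (S ^ (i * q)).mulVec (((1 - S) * aeval (S ^ p) (cyclotomic q ℚ)).mulVec (Pi.single 0 1)) =
      (aeval S (∑ i ∈ Finset.range (p - 1),
        X ^ (i * q) * ((1 - X) * expand ℚ p (cyclotomic q ℚ)))).mulVec (Pi.single 0 1) := by
    simp only [map_sum, Matrix.sum_mulVec, map_mul, map_sub, map_one, aeval_X, aeval_X_pow,
      expand_aeval, Matrix.mulVec_mulVec]
  have hdeg : (p - 1) * (q - 1) + (p - 1) = (p - 1) * q := by
    rw [← Nat.mul_succ, Nat.succ_eq_add_one, Nat.sub_add_cancel hq.one_le]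
  rw [hshift_sum, sum_X_pow_mul_one_sub_X_mul_expand_cyclotomic ℚ hp hq hlt.ne,
    Matrix.aeval_shift_mulVec_single_zero hS]
  funext j
  rw [coeff_mul_one_sub_X_pow_of_lt _ (by have := hp.two_le; omega)]

theorem cyclotomic_coeff_vector_as_shift_sum (p q : ℕ) (hp : p.Prime) (hq : q.Prime)
    (hlt : p < q) (hp2 : 2 < p)
    (S : Matrix (Fin ((p - 1) * (q - 1) + 1)) (Fin ((p - 1) * (q - 1) + 1)) ℚ)
    (hS : ∀ i j, S i j = if (i : ℕ) = (j : ℕ) + 1 then 1 else 0) :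
    (fun j : Fin ((p - 1) * (q - 1) + 1) => (cyclotomic (p * q) ℚ).coeff (j : ℕ)) =
      ∑ i ∈ Finset.range (p - 1),
        (S ^ (i * q)).mulVec
          (((1 - S) * aeval (S ^ p) (cyclotomic q ℚ)).mulVec (Pi.single 0 1)) :=
  cyclotomic_coeff_vector_as_shift_sum_general p q hp hq hlt S hS
end

section
/- Let p be prime, r coprime to p with 0 < r < p, and define words d_k ∈ {-1,0,1}^p by d_{k,j} = 1 if j + kr ≡ 0 (mod p), d_{k,j} = -1 if j + kr ≡ 1 (mod p), and 0 otherwise. Then for every i with 1 ≤ i ≤ p-2, the partial sums ω_i = d_0 + d_1 + ... + d_i have all coordinates in {-1, 0, 1}. -/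
/-!
At a fixed coordinate `j`, the word `d_k` contributes `+1` when `j + k r ≡ 0` and `-1` when
`j + k r ≡ 1 (mod p)`. Since `r` is invertible mod `p`, the residues `j + k r` for `k < p` are
distinct, so among `d_0, …, d_i` (with `i < p`) at most one contributes `+1` and at most one `-1`.
-/

open Finset

theorem card_filter_eq_le_one_of_injOn {ι α : Type*} [DecidableEq α] {s : Finset ι}
    {g : ι → α} (hg : Set.InjOn g s) (a : α) : #{k ∈ s | g k = a} ≤ 1 :=
  card_le_one.mpr fun _ hx _ hy =>
    hg (mem_filter.1 hx).1 (mem_filter.1 hy).1 ((mem_filter.1 hx).2.trans (mem_filter.1 hy).2.symm)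

theorem sum_ite_one_neg_one_mem_of_injOn {ι α : Type*} [DecidableEq α] {s : Finset ι}
    {g : ι → α} (hg : Set.InjOn g s) {a b : α} (hab : a ≠ b) :
    (∑ k ∈ s, if g k = a then (1 : ℤ) else if g k = b then -1 else 0) ∈ ({-1, 0, 1} : Set ℤ) := by
  have hsplit : ∀ k, (if g k = a then (1 : ℤ) else if g k = b then -1 else 0) =
      (if g k = a then 1 else 0) - (if g k = b then 1 else 0) := by
    intro k
    split_ifs <;> simp_all
  simp only [hsplit, sum_sub_distrib, sum_boole]
  have ha := card_filter_eq_le_one_of_injOn hg a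
  have hb := card_filter_eq_le_one_of_injOn hg b
  interval_cases #{k ∈ s | g k = a} <;> interval_cases #{k ∈ s | g k = b} <;> simp

theorem injOn_add_mul_mod {p r : ℕ} (j : ℕ) (hcop : r.Coprime p) :
    Set.InjOn (fun k => (j + k * r) % p) (range p) := by
  intro k hk l hl hkl
  have hmul : k * r ≡ l * r [MOD p] := Nat.ModEq.add_left_cancel' j hkl
  have hkl' : k ≡ l [MOD p] := hmul.cancel_right_of_coprime hcop.symm
  simpa [Nat.ModEq, Nat.mod_eq_of_lt (mem_range.1 hk), Nat.mod_eq_of_lt (mem_range.1 hl)] using hkl'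

theorem partial_sums_in_alphabet_general (p r : ℕ)
    (hcop : Nat.Coprime r p)
    (d : ℕ → Fin p → ℤ)
    (hd : ∀ k : ℕ, ∀ j : Fin p,
      d k j = if ((j : ℕ) + k * r) % p = 0 then 1
              else if ((j : ℕ) + k * r) % p = 1 then -1 else 0) :
    ∀ i : ℕ, 1 ≤ i → i ≤ p - 2 →
      ∀ j : Fin p, (∑ k ∈ Finset.range (i + 1), d k j) ∈ ({-1, 0, 1} : Set ℤ) := by
  intro i hi1 hi2 j
  have hrange : (range (i + 1) : Set ℕ) ⊆ range p := by
    simpa using range_subset_range.2 (by omega : i + 1 ≤ p)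
  simp only [hd]
  exact sum_ite_one_neg_one_mem_of_injOn ((injOn_add_mul_mod j hcop).mono hrange) zero_ne_one

theorem partial_sums_in_alphabet (p r : ℕ) (hp : p.Prime) (hr : 0 < r) (hrp : r < p)
    (hcop : Nat.Coprime r p)
    (d : ℕ → Fin p → ℤ)
    (hd : ∀ k : ℕ, ∀ j : Fin p,
      d k j = if ((j : ℕ) + k * r) % p = 0 then 1
              else if ((j : ℕ) + k * r) % p = 1 then -1 else 0) :
    ∀ i : ℕ, 1 ≤ i → i ≤ p - 2 →
      ∀ j : Fin p, (∑ k ∈ Finset.range (i + 1), d k j) ∈ ({-1, 0, 1} : Set ℤ) :=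
  partial_sums_in_alphabet_general p r hcop d hd
end

section
/- Let p < q be primes with p > 2, m = (p-1)(q-1), d_0 ∈ {-1,0,1}^p the word 1(-1)0...0, and d_i = σ^{iq}(d_0) the left cyclic shift of d_0 by iq positions. Then d_0^{(m+1)/p} = d_0^{q/p} · d_1^{q/p} · ... · d_{p-3}^{q/p} · d_{p-2}^{(q-p+2)/p}. -/
/-!
Reading `d 0` periodically, the letters at positions `iq, …, iq + q - 1` form the word
`d_i^{q/p}` because `d_i = σ^{iq}(d 0)`. Hence the concatenation of the first `p - 2` blocks
`d_i^{q/p}` is `(d 0)^{(p-2)q/p}`, the final block `d_{p-2}^{(q-p+2)/p}` continues it, and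
`(p-2)q + (q-p+2) = (p-1)(q-1) + 1`.
-/

/-- The fractional power `v^{k/p}`: the prefix of length `k` of the infinite
periodic repetition of the length-`p` word `v`. -/
def fracPow {α : Type*} {p : ℕ} (hp : 0 < p) (v : Fin p → α) (k : ℕ) : List α :=
  List.ofFn (fun j : Fin k => v ⟨(j : ℕ) % p, Nat.mod_lt _ hp⟩)

/-- The paper's `σ^s`. -/
def cyclicShift {α : Type*} {p : ℕ} (hp : 0 < p) (v : Fin p → α) (s : ℕ) : Fin p → α :=
  fun j => v ⟨((j : ℕ) + s) % p, Nat.mod_lt _ hp⟩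

lemma fracPow_add {α : Type*} {p : ℕ} (hp : 0 < p) (v : Fin p → α) (a b : ℕ) :
    fracPow hp v (a + b) = fracPow hp v a ++ fracPow hp (cyclicShift hp v a) b := by
  simp only [fracPow, cyclicShift, List.ofFn_add]
  congr 2
  funext j
  simp only [Fin.val_natAdd, Nat.add_comm _ a, Nat.add_mod_mod]

lemma flatten_ofFn_fracPow_cyclicShift {α : Type*} {p : ℕ} (hp : 0 < p) (v : Fin p → α)
    (q n : ℕ) :
    (List.ofFn fun i : Fin n => fracPow hp (cyclicShift hp v (i * q)) q).flatten =
      fracPow hp v (n * q) := by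
  induction n with
  | zero => simp [fracPow]
  | succ n ih =>
    simp only [List.ofFn_succ', List.concat_eq_append, List.flatten_append, Fin.val_castSucc,
      Fin.val_last, List.flatten_singleton, ih, Nat.succ_mul, fracPow_add]

theorem fracPow_d0_decomposition_general (p q : ℕ)
    (hlt : p < q) (hp2 : 2 < p) (hp0 : 0 < p)
    (d : ℕ → Fin p → ℤ)
    (hd : ∀ i : ℕ, ∀ j : Fin p, d i j = d 0 ⟨((j : ℕ) + i * q) % p, Nat.mod_lt _ hp0⟩) :
    fracPow hp0 (d 0) ((p - 1) * (q - 1) + 1) =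
      (List.ofFn (fun i : Fin (p - 2) => fracPow hp0 (d (i : ℕ)) q)).flatten ++
        fracPow hp0 (d (p - 2)) (q - p + 2) := by
  have hshift : ∀ i, d i = cyclicShift hp0 (d 0) (i * q) := fun i => funext (hd i)
  have hlen : (p - 1) * (q - 1) + 1 = (p - 2) * q + (q - p + 2) := by
    zify [hp2.le, hlt.le, (by omega : 1 ≤ p), (by omega : 1 ≤ q)]
    ring
  rw [hlen, fracPow_add, ← flatten_ofFn_fracPow_cyclicShift, hshift (p - 2)]
  congr 2
  exact congrArg List.ofFn (funext fun i => by rw [hshift i])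

theorem fracPow_d0_decomposition (p q : ℕ) (hp : p.Prime) (hq : q.Prime)
    (hlt : p < q) (hp2 : 2 < p) (hp0 : 0 < p)
    (d : ℕ → Fin p → ℤ)
    (hd0 : ∀ j : Fin p, d 0 j = if (j : ℕ) = 0 then 1 else if (j : ℕ) = 1 then -1 else 0)
    (hd : ∀ i : ℕ, ∀ j : Fin p, d i j = d 0 ⟨((j : ℕ) + i * q) % p, Nat.mod_lt _ hp0⟩) :
    fracPow hp0 (d 0) ((p - 1) * (q - 1) + 1) =
      (List.ofFn (fun i : Fin (p - 2) => fracPow hp0 (d (i : ℕ)) q)).flatten ++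
        fracPow hp0 (d (p - 2)) (q - p + 2) :=
  fracPow_d0_decomposition_general p q hlt hp2 hp0 d hd
end

section
/- Let p < q be primes with p > 2, m = (p-1)(q-1), and for 0 ≤ i ≤ p-2 define ω_i = d_0 + ... + d_i where d_k is the left cyclic shift by kq of the word d_0 = 1(-1)0...0 of length p. Then the coefficient word of Φ_{pq} (reading coefficient of x^j at position j, 0 ≤ j ≤ m) equals the concatenation ω_0^{q/p} · ω_1^{q/p} · ... · ω_{p-3}^{q/p} · ω_{p-2}^{(q-p+2)/p}. -/
/-!
Since `p ∤ q`, `Φ_q(x^p) = Φ_{pq}(x) Φ_q(x)`, hence `Φ_{pq}(x) (1 - x^q) = (1 - x) Φ_q(x^p)`.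
Below degree `pq` the right-hand side has the coefficients of `d_0` repeated with period `p`,
so the coefficients `c_n` of `Φ_{pq}` satisfy `c_n = c_{n-q} + d_0[n mod p]`. Cutting the
coefficient word into blocks of length `q`, block `i` is block `i - 1` plus `d_i` (read
periodically), which is `ω_i^{q/p}`; the last block is cut off at degree `(p-1)(q-1)`.
-/

open Polynomial

open Finset

/-- The letter at position `r` of the word `d_0 = 1(-1)0…0`. -/
def seed (r : ℕ) : ℤ := if r = 0 then 1 else if r = 1 then -1 else 0

theorem seed_mod_succ {p : ℕ} (hp : 1 < p) (n : ℕ) :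
    seed ((n + 1) % p) = (if p ∣ n + 1 then 1 else 0) - if p ∣ n then 1 else 0 := by
  have := Nat.mod_lt n (by omega : 0 < p)
  simp only [seed, Nat.dvd_iff_mod_eq_zero, Nat.add_mod_eq_ite, Nat.mod_eq_of_lt hp]
  generalize n % p = r at *
  split_ifs <;> first | contradiction | omega

section

variable {p q : ℕ}

theorem cyclotomic_prime_mul_prime_mul_one_sub_X_pow (R : Type*) [CommRing R] (hp : p.Prime)
    (hq : q.Prime) (hpq : p ≠ q) :
    cyclotomic (p * q) R * (1 - X ^ q) = expand R p (cyclotomic q R) * (1 - X) := by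
  have := Fact.mk hq
  rw [cyclotomic_expand_eq_cyclotomic_mul hp ((Nat.prime_dvd_prime_iff_eq hp hq).not.mpr hpq),
    mul_comm q p]
  linear_combination cyclotomic (p * q) R * cyclotomic_prime_mul_X_sub_one R q

theorem coeff_expand_cyclotomic_prime (R : Type*) [CommRing R] (hp : 0 < p) (hq : q.Prime)
    {n : ℕ} (hn : n < p * q) :
    (expand R p (cyclotomic q R)).coeff n = if p ∣ n then 1 else 0 := by
  have := Fact.mk hq
  have : n / p < q := (Nat.div_lt_iff_lt_mul hp).mpr (by linarith)
  rw [coeff_expand hp, cyclotomic_prime, finsetSum_coeff]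
  simp only [coeff_X_pow, sum_ite_eq, mem_range, this, if_true]

theorem coeff_expand_cyclotomic_prime_mul_one_sub_X (hp : 1 < p) (hq : q.Prime) {n : ℕ}
    (hn : n < p * q) :
    (expand ℤ p (cyclotomic q ℤ) * (1 - X)).coeff n = seed (n % p) := by
  rw [mul_sub, mul_one, coeff_sub]
  rcases n with _ | n
  · simp [coeff_expand_cyclotomic_prime ℤ (by omega) hq hn, seed]
  · rw [coeff_mul_X, coeff_expand_cyclotomic_prime ℤ (by omega) hq hn,
      coeff_expand_cyclotomic_prime ℤ (by omega) hq (by omega), seed_mod_succ hp]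

theorem coeff_cyclotomic_prime_mul_prime (hp : p.Prime) (hq : q.Prime) (hpq : p ≠ q) {n : ℕ}
    (hn : n < p * q) :
    (cyclotomic (p * q) ℤ).coeff n =
      (if q ≤ n then (cyclotomic (p * q) ℤ).coeff (n - q) else 0) + seed (n % p) := by
  have h : (cyclotomic (p * q) ℤ * (1 - X ^ q)).coeff n =
      (expand ℤ p (cyclotomic q ℤ) * (1 - X)).coeff n := by
    rw [cyclotomic_prime_mul_prime_mul_one_sub_X_pow ℤ hp hq hpq]
  rw [coeff_expand_cyclotomic_prime_mul_one_sub_X hp.one_lt hq hn, mul_sub, mul_one, coeff_sub,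
    coeff_mul_X_pow'] at h
  linarith

theorem coeff_cyclotomic_prime_mul_prime_eq_sum (hp : p.Prime) (hq : q.Prime) (hpq : p ≠ q)
    {i j : ℕ} (hi : i < p) (hj : j < q) :
    (cyclotomic (p * q) ℤ).coeff (i * q + j) =
      ∑ k ∈ range (i + 1), seed ((j + k * q) % p) := by
  induction i with
  | zero =>
    rw [coeff_cyclotomic_prime_mul_prime hp hq hpq (by nlinarith [hp.one_lt]), if_neg (by omega)]
    simp
  | succ i ih =>
    rw [coeff_cyclotomic_prime_mul_prime hp hq hpq (by nlinarith), if_pos (by nlinarith),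
      show (i + 1) * q + j - q = i * q + j by rw [add_mul]; omega, ih (by omega),
      sum_range_succ _ (i + 1), add_comm j]

end

theorem cyclotomic_word_decomposition_general (p q : ℕ) (hp : p.Prime) (hq : q.Prime)
    (hlt : p < q) (hp0 : 0 < p)
    (d : ℕ → Fin p → ℤ) (ω : ℕ → Fin p → ℤ)
    (hd0 : ∀ j : Fin p, d 0 j = if (j : ℕ) = 0 then 1 else if (j : ℕ) = 1 then -1 else 0)
    (hd : ∀ i : ℕ, ∀ j : Fin p, d i j = d 0 ⟨((j : ℕ) + i * q) % p, Nat.mod_lt _ hp0⟩)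
    (hω : ∀ i : ℕ, ∀ j : Fin p, ω i j = ∑ k ∈ Finset.range (i + 1), d k j) :
    List.ofFn (fun j : Fin ((p - 1) * (q - 1) + 1) => (cyclotomic (p * q) ℤ).coeff (j : ℕ)) =
      (List.ofFn (fun i : Fin (p - 2) => fracPow hp0 (ω (i : ℕ)) q)).flatten ++
        fracPow hp0 (ω (p - 2)) (q - p + 2) := by
  have two_le_p := hp.two_le
  have hcoeff : ∀ i < p - 1, ∀ j < q,
      (cyclotomic (p * q) ℤ).coeff (i * q + j) = ω i ⟨j % p, Nat.mod_lt _ hp0⟩ := by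
    intro i hi j hj
    rw [coeff_cyclotomic_prime_mul_prime_eq_sum hp hq hlt.ne (by omega) hj, hω]
    refine sum_congr rfl fun k _ => ?_
    rw [hd, hd0]
    simp only [seed, Nat.mod_add_mod]
  have hlen : (p - 1) * (q - 1) + 1 = (p - 2) * q + (q - p + 2) := by
    zify [two_le_p, hlt.le, hq.one_le, hp.one_le, (by omega : p ≤ q + 2)]
    ring
  rw [List.ofFn_congr hlen, List.ofFn_add, List.ofFn_mul]
  congr 1
  · refine congrArg List.flatten (List.ofFn_inj.mpr (funext fun i => ?_))
    exact List.ofFn_inj.mpr (funext fun j => hcoeff i (by omega) j j.2)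
  · exact List.ofFn_inj.mpr (funext fun j => hcoeff (p - 2) (by omega) j (by omega))

theorem cyclotomic_word_decomposition (p q : ℕ) (hp : p.Prime) (hq : q.Prime)
    (hlt : p < q) (hp2 : 2 < p) (hp0 : 0 < p)
    (d : ℕ → Fin p → ℤ) (ω : ℕ → Fin p → ℤ)
    (hd0 : ∀ j : Fin p, d 0 j = if (j : ℕ) = 0 then 1 else if (j : ℕ) = 1 then -1 else 0)
    (hd : ∀ i : ℕ, ∀ j : Fin p, d i j = d 0 ⟨((j : ℕ) + i * q) % p, Nat.mod_lt _ hp0⟩)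
    (hω : ∀ i : ℕ, ∀ j : Fin p, ω i j = ∑ k ∈ Finset.range (i + 1), d k j) :
    List.ofFn (fun j : Fin ((p - 1) * (q - 1) + 1) => (cyclotomic (p * q) ℤ).coeff (j : ℕ)) =
      (List.ofFn (fun i : Fin (p - 2) => fracPow hp0 (ω (i : ℕ)) q)).flatten ++
        fracPow hp0 (ω (p - 2)) (q - p + 2) :=
  cyclotomic_word_decomposition_general p q hp hq hlt hp0 d ω hd0 hd hω
end

section
/- Let p and q be coprime integers with 2 < p < q. Then the semigroup polynomial satisfies F_{p,q}(x) = 1 + (x-1) · Σ_{s ∉ S(p,q)} x^s, where the sum ranges over the (finitely many) nonnegative integers not in the numerical semigroup S(p,q) = {ap + bq : a,b ∈ ℤ_{≥0}}. -/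
/-!
Write `S = S(p, q)` (`pairSemigroup p q`) and `G(x) = ∑_{s ∉ S} x ^ s`; every
`n ≥ (p - 1)(q - 1)` lies in `S`, so `G` is a polynomial. Both `range q ∪ (q + gaps)` and
`Apéry(S, q) ∪ gaps` enumerate the `n` with `n - q ∉ S`, whence
`∑_{j<q} x^j + x^q G = ∑_{a ∈ Apéry(S, q)} x^a + G`. By coprimality the Apéry set is
`{ip | i < q}`, and multiplying through by `(x - 1)(x^p - 1)` turns the two geometric sums into
`x^q - 1` and `x^{pq} - 1`, which is the claimed identity cleared of denominators.
-/

open Finset Polynomial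

def pairSemigroup (p q : ℕ) : Set ℕ := {n | ∃ a b : ℕ, a * p + b * q = n}

section Apery

variable {R : Type*} [CommSemiring R] {S : Set ℕ} {q : ℕ} {H A : Finset ℕ}

theorem geom_sum_add_pow_mul_gaps_eq_apery_add_gaps (hS : ∀ s ∈ S, s + q ∈ S)
    (hH : ∀ n, n ∈ H ↔ n ∉ S)
    (hA : ∀ n, n ∈ A ↔ n ∈ S ∧ ∀ m, m + q = n → m ∉ S) (x : R) :
    ∑ j ∈ range q, x ^ j + x ^ q * ∑ h ∈ H, x ^ h = ∑ a ∈ A, x ^ a + ∑ h ∈ H, x ^ h := by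
  have hleft : ∀ n, n ∈ range q ∪ H.map (addRightEmbedding q) ↔ ∀ m, m + q = n → m ∉ S := by
    intro n
    simp only [mem_union, mem_range, mem_map, addRightEmbedding_apply, hH]
    constructor
    · rintro (hn | ⟨h, hh, rfl⟩) m hm
      · omega
      · rwa [Nat.add_right_cancel hm]
    · intro hn
      by_cases hnq : n < q
      · exact Or.inl hnq
      · exact Or.inr ⟨n - q, hn _ (by omega), by omega⟩
  have hright : ∀ n, n ∈ A ∪ H ↔ ∀ m, m + q = n → m ∉ S := by
    intro n
    simp only [mem_union, hA, hH]
    refine ⟨?_, fun hn => (em (n ∈ S)).imp (⟨·, hn⟩) id⟩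
    rintro (⟨-, hn⟩ | hn) m rfl hm
    · exact hn m rfl hm
    · exact hn (hS m hm)
  have hdisj_left : Disjoint (range q) (H.map (addRightEmbedding q)) := by
    simp only [disjoint_left, mem_range, mem_map, addRightEmbedding_apply]
    rintro _ hn ⟨h, -, rfl⟩
    omega
  have hdisj_right : Disjoint A H :=
    disjoint_left.2 fun n hnA hnH => (hH n).1 hnH ((hA n).1 hnA).1
  have hsets : range q ∪ H.map (addRightEmbedding q) = A ∪ H :=
    ext fun n => (hleft n).trans (hright n).symm
  calc ∑ j ∈ range q, x ^ j + x ^ q * ∑ h ∈ H, x ^ h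
      = ∑ n ∈ range q ∪ H.map (addRightEmbedding q), x ^ n := by
        rw [sum_union hdisj_left, sum_map, mul_sum]
        simp only [addRightEmbedding_apply, pow_add, mul_comm]
    _ = ∑ a ∈ A, x ^ a + ∑ h ∈ H, x ^ h := by rw [hsets, sum_union hdisj_right]

end Apery

namespace pairSemigroup

variable {p q n : ℕ}

theorem add_right_mem (hn : n ∈ pairSemigroup p q) : n + q ∈ pairSemigroup p q := by
  obtain ⟨a, b, rfl⟩ := hn
  exact ⟨a, b + 1, by ring⟩

theorem mem_of_sub_one_mul_sub_one_le (hcop : p.Coprime q) (hn : (p - 1) * (q - 1) ≤ n) :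
    n ∈ pairSemigroup p q :=
  Nat.exists_add_mul_eq_of_gcd_dvd_of_mul_pred_le p q n (by simp [hcop.gcd_eq_one]) (by simpa)

theorem mem_apery_iff (hcop : p.Coprime q) (hp : p ≠ 0) :
    (n ∈ pairSemigroup p q ∧ ∀ m, m + q = n → m ∉ pairSemigroup p q) ↔ ∃ i < q, i * p = n := by
  constructor
  · rintro ⟨⟨a, b, rfl⟩, hmin⟩
    obtain _ | b := b
    · refine ⟨a, ?_, by simp⟩
      by_contra! haq
      obtain ⟨c, rfl⟩ := Nat.exists_eq_add_of_le' haq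
      obtain ⟨r, rfl⟩ := Nat.exists_eq_add_one.2 (Nat.pos_of_ne_zero hp)
      exact hmin (c * (r + 1) + r * q) (by ring) ⟨c, r, rfl⟩
    · exact (hmin (a * p + b * q) (by ring) ⟨a, b, rfl⟩).elim
  · rintro ⟨i, hi, rfl⟩
    refine ⟨⟨i, 0, by simp⟩, ?_⟩
    rintro m hm ⟨a, b, rfl⟩
    have hai : a < i := Nat.lt_of_mul_lt_mul_right (a := p) (by omega)
    have hdvd : q ∣ (i - a) * p := Dvd.intro_left (b + 1) (by rw [Nat.sub_mul, add_one_mul]; omega)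
    have := Nat.le_of_dvd (by omega) (hcop.symm.dvd_of_dvd_mul_right hdvd)
    omega

theorem one_add_mul_sum_gaps_mul_eq {R : Type*} [CommRing R] {H : Finset ℕ}
    (hcop : p.Coprime q) (hp : p ≠ 0) (hH : ∀ n, n ∈ H ↔ n ∉ pairSemigroup p q) (x : R) :
    (1 + (x - 1) * ∑ s ∈ H, x ^ s) * ((x ^ p - 1) * (x ^ q - 1)) = (x ^ (p * q) - 1) * (x - 1) := by
  have hapery := geom_sum_add_pow_mul_gaps_eq_apery_add_gaps (fun _ => add_right_mem) hH
    (A := (range q).image (· * p)) (fun n => by simp [mem_apery_iff hcop hp]) x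
  rw [sum_image fun i _ j _ h => Nat.eq_of_mul_eq_mul_right (Nat.pos_of_ne_zero hp) h] at hapery
  have hgeom_p : ∑ i ∈ range q, x ^ (i * p) = ∑ i ∈ range q, (x ^ p) ^ i :=
    sum_congr rfl fun i _ => by rw [← pow_mul, mul_comm]
  have hq := geom_sum_mul x q
  have hpq := geom_sum_mul (x ^ p) q
  rw [← hgeom_p, ← pow_mul] at hpq
  linear_combination (x - 1) * (x ^ p - 1) * hapery - (x ^ p - 1) * hq + (x - 1) * hpq

end pairSemigroup

open Polynomial Classical in

theorem semigroup_polynomial_gaps_general (p q : ℕ) (hcop : Nat.Coprime p q)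
    (hp : 2 < p) (F : ℤ[X])
    (hF : ((X : ℤ[X]) ^ (p * q) - 1) * (X - 1) = F * ((X ^ p - 1) * (X ^ q - 1))) :
    (∀ s : ℕ, (¬ ∃ a b : ℕ, a * p + b * q = s) → s < p * q) ∧
      F = 1 + (X - 1) *
        ∑ s ∈ (Finset.range (p * q)).filter (fun s => ¬ ∃ a b : ℕ, a * p + b * q = s),
          (X : ℤ[X]) ^ s := by
  have hq : q ≠ 0 := by
    rintro rfl
    rw [Nat.coprime_zero_right] at hcop
    omega
  have gap_lt : ∀ s, s ∉ pairSemigroup p q → s < p * q := fun s hs => by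
    by_contra! h
    exact hs (pairSemigroup.mem_of_sub_one_mul_sub_one_le hcop
      (le_trans (Nat.mul_le_mul (Nat.sub_le p 1) (Nat.sub_le q 1)) h))
  refine ⟨gap_lt, ?_⟩
  have hD : ((X : ℤ[X]) ^ p - 1) * (X ^ q - 1) ≠ 0 := by
    simpa using mul_ne_zero (X_pow_sub_C_ne_zero (by omega : 0 < p) (1 : ℤ))
      (X_pow_sub_C_ne_zero (Nat.pos_of_ne_zero hq) (1 : ℤ))
  refine mul_right_cancel₀ hD (hF.symm.trans ?_)
  refine (pairSemigroup.one_add_mul_sum_gaps_mul_eq hcop (by omega) (fun n => ?_) X).symm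
  rw [mem_filter, mem_range]
  exact ⟨And.right, fun h => ⟨gap_lt n h, h⟩⟩

open Polynomial Classical in
theorem semigroup_polynomial_gaps (p q : ℕ) (hcop : Nat.Coprime p q)
    (hp : 2 < p) (hpq : p < q) (F : ℤ[X])
    (hF : ((X : ℤ[X]) ^ (p * q) - 1) * (X - 1) = F * ((X ^ p - 1) * (X ^ q - 1))) :
    (∀ s : ℕ, (¬ ∃ a b : ℕ, a * p + b * q = s) → s < p * q) ∧
      F = 1 + (X - 1) *
        ∑ s ∈ (Finset.range (p * q)).filter (fun s => ¬ ∃ a b : ℕ, a * p + b * q = s),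
          (X : ℤ[X]) ^ s :=
  semigroup_polynomial_gaps_general p q hcop hp F hF
end

section
/- Let p < q be primes. Every coefficient of the binary cyclotomic polynomial Φ_{pq} belongs to {-1, 0, 1}. -/
/-!
Lam–Leung: choose `α ≤ q`, `β ≤ p` with `p α + q β = p q + 1`. Multiplying by
`(X^p - 1)(X^q - 1)` shows
`Φ_{pq} = (∑_{i<α} X^{pi})(∑_{j<β} X^{qj}) - X (∑_{i<q-α} X^{pi})(∑_{j<p-β} X^{qj})`.
Since `p` and `q` are coprime, an exponent `p i + q j` with `i < q` determines `(i, j)`, so both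
products have all coefficients in `{0, 1}`, and their difference has coefficients in `{-1, 0, 1}`.
-/

open Polynomial Finset

theorem Nat.Coprime.exists_mul_add_mul_eq_mul_add_one {p q : ℕ} (hpq : p.Coprime q)
    (hp : 0 < p) (hq : 0 < q) : ∃ α ≤ q, ∃ β ≤ p, p * α + q * β = p * q + 1 := by
  obtain ⟨a, b, hab⟩ :=
    Nat.exists_add_mul_eq_of_gcd_dvd_of_mul_pred_le p q ((p - 1) * (q - 1))
      (by simp [hpq.gcd_eq_one]) (by simp)
  have hrel : p * (a + 1) + q * (b + 1) = p * q + 1 := by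
    obtain ⟨p, rfl⟩ := Nat.exists_eq_add_one_of_ne_zero hp.ne'
    obtain ⟨q, rfl⟩ := Nat.exists_eq_add_one_of_ne_zero hq.ne'
    simp only [Nat.add_sub_cancel] at hab
    linear_combination hab
  refine ⟨a + 1, ?_, b + 1, ?_, hrel⟩
  · exact Nat.le_of_mul_le_mul_left (by nlinarith) hp
  · exact Nat.le_of_mul_le_mul_left (by nlinarith) hq

theorem Nat.Coprime.injOn_mul_add_mul {p q : ℕ} (hpq : p.Coprime q) :
    Set.InjOn (fun x : ℕ × ℕ => p * x.1 + q * x.2) {x | x.1 < q} := by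
  rintro ⟨i, j⟩ (hi : i < q) ⟨i', j'⟩ (hi' : i' < q) h
  simp only at h
  have hmod : p * i ≡ p * i' [MOD q] := by
    simpa [Nat.ModEq, Nat.add_mul_mod_self_left] using congrArg (· % q) h
  obtain rfl : i = i' := (hmod.cancel_left_of_coprime hpq.symm).eq_of_lt_of_lt hi hi'
  have hj : q * j = q * j' := by omega
  rw [Nat.eq_of_mul_eq_mul_left (by omega) hj]

section

variable {R : Type*}

theorem coeff_sum_X_pow_mem_zero_one [Semiring R] {ι : Type*} {s : Finset ι} {e : ι → ℕ}
    (he : Set.InjOn e s) (k : ℕ) :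
    (∑ x ∈ s, (X : R[X]) ^ e x).coeff k ∈ ({0, 1} : Set R) := by
  classical
  rw [← sum_image (f := fun n => (X : R[X]) ^ n) he, finsetSum_coeff]
  simp only [coeff_X_pow, sum_ite_eq]
  split_ifs <;> simp

theorem coeff_X_mul_mem_zero_one [Semiring R] {f : R[X]}
    (hf : ∀ k, f.coeff k ∈ ({0, 1} : Set R)) (k : ℕ) :
    (X * f).coeff k ∈ ({0, 1} : Set R) := by
  cases k with
  | zero => simp
  | succ k => rw [coeff_X_mul]; exact hf k

theorem coeff_sub_mem_of_mem_zero_one [Ring R] {f g : R[X]} {k : ℕ}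
    (hf : f.coeff k ∈ ({0, 1} : Set R)) (hg : g.coeff k ∈ ({0, 1} : Set R)) :
    (f - g).coeff k ∈ ({-1, 0, 1} : Set R) := by
  rw [coeff_sub]
  rcases hf with hf | hf <;> rcases hg with hg | hg <;> simp_all

theorem geom_sum_mul_geom_sum_X_pow [Semiring R] (p q a b : ℕ) :
    (∑ i ∈ range a, (X : R[X]) ^ (p * i)) * ∑ j ∈ range b, (X : R[X]) ^ (q * j) =
      ∑ x ∈ range a ×ˢ range b, (X : R[X]) ^ (p * x.1 + q * x.2) := by
  simp only [sum_product, sum_mul_sum, pow_add]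

theorem coeff_geom_sum_mul_geom_sum_X_pow_mem_zero_one [Semiring R] {p q a : ℕ}
    (hpq : p.Coprime q) (ha : a ≤ q) (b k : ℕ) :
    ((∑ i ∈ range a, (X : R[X]) ^ (p * i)) * ∑ j ∈ range b, (X : R[X]) ^ (q * j)).coeff k
      ∈ ({0, 1} : Set R) := by
  rw [geom_sum_mul_geom_sum_X_pow]
  refine coeff_sum_X_pow_mem_zero_one (hpq.injOn_mul_add_mul.mono ?_) k
  intro x hx
  simp only [coe_product, coe_range, Set.mem_prod, Set.mem_Iio] at hx
  exact hx.1.trans_le ha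

theorem geom_sum_X_pow_mul [Ring R] (n m : ℕ) :
    (∑ i ∈ range m, (X : R[X]) ^ (n * i)) * (X ^ n - 1) = X ^ (n * m) - 1 := by
  simpa [pow_mul] using geom_sum_mul ((X : R[X]) ^ n) m

theorem X_pow_sub_one_mul_sub_X_mul [CommRing R] (x : R) {a b c d n : ℕ}
    (hac : a + c = n) (hbd : b + d = n) (hab : a + b = n + 1) :
    (x ^ a - 1) * (x ^ b - 1) - x * ((x ^ c - 1) * (x ^ d - 1)) = (x ^ n - 1) * (x - 1) := by
  obtain ⟨rfl, rfl, rfl⟩ : a = d + 1 ∧ b = c + 1 ∧ n = c + d + 1 := by omega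
  ring

theorem cyclotomic_mul_prime_mul_X_pow_sub_one [CommRing R] {p q : ℕ}
    (hp : p.Prime) (hq : q.Prime) (hpq : p ≠ q) :
    cyclotomic (p * q) R * ((X ^ p - 1) * (X ^ q - 1)) = (X ^ (p * q) - 1) * (X - 1) := by
  have := Fact.mk hq
  have hexpand : expand R p (cyclotomic q R) = cyclotomic (p * q) R * cyclotomic q R := by
    rw [mul_comm p q]
    exact cyclotomic_expand_eq_cyclotomic_mul hp (by rwa [Nat.prime_dvd_prime_iff_eq hp hq]) R
  have hq_root : cyclotomic q R * (X - 1) = X ^ q - 1 := cyclotomic_prime_mul_X_sub_one R q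
  have hpq_root : expand R p (cyclotomic q R) * (X ^ p - 1) = X ^ (p * q) - 1 := by
    simpa [← pow_mul, mul_comm] using congrArg (expand R p) hq_root
  linear_combination -(cyclotomic (p * q) R * (X ^ p - 1)) * hq_root
    - ((X - 1) * (X ^ p - 1)) * hexpand + (X - 1) * hpq_root

theorem cyclotomic_prime_mul_prime_eq [CommRing R] {p q α β : ℕ}
    (hp : p.Prime) (hq : q.Prime) (hpq : p ≠ q) (hα : α ≤ q) (hβ : β ≤ p)
    (hrel : p * α + q * β = p * q + 1) :
    cyclotomic (p * q) R =
      (∑ i ∈ range α, (X : R[X]) ^ (p * i)) * (∑ j ∈ range β, X ^ (q * j)) -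
        X * ((∑ i ∈ range (q - α), X ^ (p * i)) * ∑ j ∈ range (p - β), X ^ (q * j)) := by
  have hmonic : ((X ^ p - 1) * (X ^ q - 1) : R[X]).Monic := by
    simpa using
      (monic_X_pow_sub_C (1 : R) hp.ne_zero).mul (monic_X_pow_sub_C (1 : R) hq.ne_zero)
  refine hmonic.isRegular.right ?_
  change _ * _ = _ * _
  rw [cyclotomic_mul_prime_mul_X_pow_sub_one hp hq hpq,
    ← X_pow_sub_one_mul_sub_X_mul (X : R[X]) (a := p * α) (b := q * β) (c := p * (q - α))
      (d := q * (p - β)) (by rw [← mul_add, Nat.add_sub_cancel' hα])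
      (by rw [← mul_add, Nat.add_sub_cancel' hβ, mul_comm]) hrel,
    ← geom_sum_X_pow_mul p α, ← geom_sum_X_pow_mul q β, ← geom_sum_X_pow_mul p (q - α),
    ← geom_sum_X_pow_mul q (p - β)]
  ring

end

theorem binary_cyclotomic_coeffs_ternary (p q : ℕ) (hp : p.Prime) (hq : q.Prime)
    (hlt : p < q) :
    ∀ j : ℕ, (cyclotomic (p * q) ℤ).coeff j ∈ ({-1, 0, 1} : Set ℤ) := by
  have hpq : p.Coprime q := (Nat.coprime_primes hp hq).mpr hlt.ne
  obtain ⟨α, hα, β, hβ, hrel⟩ := hpq.exists_mul_add_mul_eq_mul_add_one hp.pos hq.pos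
  intro j
  rw [cyclotomic_prime_mul_prime_eq hp hq hlt.ne hα hβ hrel]
  exact coeff_sub_mem_of_mem_zero_one
    (coeff_geom_sum_mul_geom_sum_X_pow_mem_zero_one hpq hα β j)
    (coeff_X_mul_mem_zero_one
      (coeff_geom_sum_mul_geom_sum_X_pow_mem_zero_one hpq (q.sub_le α) _) j)
end
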